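/- arXiv:math/0607219 — 3 statements merged into one kernel-verified Lean document; each statement's English description precedes it below -/
import Mathlib

section
/- Let a, b > 0 and let D ⊆ (−a,a) × (−b,b) be an open convex set, symmetric about both coordinate axes, with (a,0) and (0,b) in the closure of D. Then the open triangle {(x,y) : x > 0, y > 0, bx + ay < ab} is contained in D; consequently every point (x,y) with x > 0 and y > 0 that lies in (−a,a) × (−b,b) but not in D belongs to Θ_{a,b} = {(x,y) : 0 < x < a, −(b/a)x + b ≤ y < b}. -/
open Set

/-- `D` is symmetric about both coordinate axes. -/
def SymmBothAxes (D : Set (ℝ × ℝ)) : Prop :=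
  ∀ x y : ℝ, ((x, y) ∈ D ↔ (-x, y) ∈ D) ∧ ((x, y) ∈ D ↔ (x, -y) ∈ D)

/-- For a convex doubly symmetric domain `D ⊆ (-a,a) × (-b,b)` whose closure contains
`(a,0)` and `(0,b)`, the open triangle `{x > 0, y > 0, bx + ay < ab}` lies in `D`;
hence any first-quadrant point of `(-a,a) × (-b,b)` not in `D` lies in
`Θ_{a,b} = {(x,y) : 0 < x < a, -(b/a)x + b ≤ y < b}`. -/
theorem triangle_subset_and_complement_in_theta
    (a b : ℝ) (ha : 0 < a) (hb : 0 < b)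
    (D : Set (ℝ × ℝ)) (hsub : D ⊆ Ioo (-a) a ×ˢ Ioo (-b) b)
    (hopen : IsOpen D) (hconv : Convex ℝ D) (hsymm : SymmBothAxes D)
    (hca : (a, (0 : ℝ)) ∈ closure D) (hcb : ((0 : ℝ), b) ∈ closure D) :
    {p : ℝ × ℝ | 0 < p.1 ∧ 0 < p.2 ∧ b * p.1 + a * p.2 < a * b} ⊆ D ∧
      ∀ p : ℝ × ℝ, 0 < p.1 → 0 < p.2 → p ∈ Ioo (-a) a ×ˢ Ioo (-b) b → p ∉ D →
        p ∈ {q : ℝ × ℝ | 0 < q.1 ∧ q.1 < a ∧ -(b / a) * q.1 + b ≤ q.2 ∧ q.2 < b} := by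
  -- D is nonempty
  obtain ⟨q, hq⟩ : D.Nonempty := by
    rcases closure_nonempty_iff.mp ⟨_, hca⟩ with h; exact h
  -- 0 ∈ D
  have hq' : (-q.1, -q.2) ∈ D := by
    have h1 := (hsymm q.1 q.2).1.mp (by simpa using hq)
    exact (hsymm (-q.1) q.2).2.mp h1
  have h0 : ((0 : ℝ), (0 : ℝ)) ∈ D := by
    have := hconv hq hq' (by norm_num : (0:ℝ) ≤ 1/2) (by norm_num : (0:ℝ) ≤ 1/2) (by norm_num)
    simpa [Prod.ext_iff, Prod.smul_def] using this
  have htri : {p : ℝ × ℝ | 0 < p.1 ∧ 0 < p.2 ∧ b * p.1 + a * p.2 < a * b} ⊆ D := by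
    rintro ⟨x, y⟩ ⟨hx, hy, hxy⟩
    set c : ℝ := x / a + y / b with hc
    have hc0 : 0 < c := by positivity
    have hc1 : c < 1 := by
      rw [hc, div_add_div _ _ (ne_of_gt ha) (ne_of_gt hb), div_lt_one (by positivity)]
      nlinarith
    -- m = (x/c, y/c) is on the segment between (a,0) and (0,b), hence in closure D
    have hmem : ((x / (a * c)) • ((a : ℝ), (0:ℝ)) + (y / (b * c)) • ((0:ℝ), b)) ∈ closure D := by
      apply (hconv.closure) hca hcb (by positivity) (by positivity)
      rw [hc]
      field_simp
    have key := hconv.combo_interior_closure_mem_interior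
      (x := ((0:ℝ), (0:ℝ))) (y := (x / (a * c)) • ((a : ℝ), (0:ℝ)) + (y / (b * c)) • ((0:ℝ), b))
      (by rwa [hopen.interior_eq]) hmem
      (a := 1 - c) (b := c) (by linarith) (le_of_lt hc0) (by ring)
    rw [hopen.interior_eq] at key
    have : (1 - c) • ((0:ℝ), (0:ℝ)) + c • ((x / (a * c)) • ((a : ℝ), (0:ℝ)) + (y / (b * c)) • ((0:ℝ), b))
        = ((x : ℝ), y) := by
      simp only [Prod.smul_def, Prod.mk_add_mk, smul_eq_mul, Prod.ext_iff]
      constructor <;> (field_simp; try ring)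
    rwa [this] at key
  refine ⟨htri, ?_⟩
  rintro ⟨x, y⟩ hx hy hbox hnD
  simp only [mem_prod, mem_Ioo] at hbox
  refine ⟨hx, hbox.1.2, ?_, hbox.2.2⟩
  by_contra hlt
  push_neg at hlt
  apply hnD
  apply htri
  refine ⟨hx, hy, ?_⟩
  have : -(b / a) * x + b > y := hlt
  have h2 : b * x + a * y < a * (-(b/a) * x + b) + b * x := by nlinarith
  have h3 : a * (-(b/a) * x + b) + b * x = a * b := by field_simp; ring
  linarith
end

section
/- Let D ⊆ (−1,1) × (−1,1) be an open convex set, symmetric about both coordinate axes, and let D⁺ = D ∩ {x > 0}. For z ∈ D⁺ let η(z) denote the distance from z to the boundary of D⁺, and for ε > 0 let D⁺_ε = {z ∈ D⁺ : η(z) > ε}. Then the two-dimensional Lebesgue measure of D⁺ \ D⁺_ε is at most 6√2·ε. -/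
open Set MeasureTheory

/-- `A⁺`, the part of `A` to the right of the `y`-axis. -/
def posPart (A : Set (ℝ × ℝ)) : Set (ℝ × ℝ) := A ∩ {p : ℝ × ℝ | 0 < p.1}

private lemma seg_vert {M : Set (ℝ × ℝ)} (hM : Convex ℝ M) {c y₁ y₂ y : ℝ}
    (h1 : (c, y₁) ∈ M) (h2 : (c, y₂) ∈ M) (hl : y₁ ≤ y) (hr : y ≤ y₂) :
    (c, y) ∈ M := by
  rcases eq_or_lt_of_le (hl.trans hr) with h | h
  · have hy : y = y₁ := le_antisymm (h ▸ hr) hl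
    rwa [hy]
  · have hden : 0 < y₂ - y₁ := by linarith
    set t := (y - y₁) / (y₂ - y₁) with hts
    have ht0 : 0 ≤ t := div_nonneg (by linarith) hden.le
    have ht1 : t ≤ 1 := (div_le_one hden).2 (by linarith)
    have hmem := hM h2 h1 (a := t) (b := 1 - t) ht0 (by linarith) (by ring)
    have he : t • ((c, y₂) : ℝ × ℝ) + (1 - t) • ((c, y₁) : ℝ × ℝ) = (c, y) := by
      have : t * y₂ + (1 - t) * y₁ = y := by
        have h' : t * (y₂ - y₁) = y - y₁ := by rw [hts]; exact div_mul_cancel₀ _ hden.ne'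
        linarith
      simp [Prod.smul_mk, Prod.mk_add_mk, this]
      ring
    rwa [he] at hmem

private lemma seg_horiz {M : Set (ℝ × ℝ)} (hM : Convex ℝ M) {c x₁ x₂ x : ℝ}
    (h1 : (x₁, c) ∈ M) (h2 : (x₂, c) ∈ M) (hl : x₁ ≤ x) (hr : x ≤ x₂) :
    (x, c) ∈ M := by
  rcases eq_or_lt_of_le (hl.trans hr) with h | h
  · have hy : x = x₁ := le_antisymm (h ▸ hr) hl
    rwa [hy]
  · have hden : 0 < x₂ - x₁ := by linarith
    set t := (x - x₁) / (x₂ - x₁) with hts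
    have ht0 : 0 ≤ t := div_nonneg (by linarith) hden.le
    have ht1 : t ≤ 1 := (div_le_one hden).2 (by linarith)
    have hmem := hM h2 h1 (a := t) (b := 1 - t) ht0 (by linarith) (by ring)
    have he : t • ((x₂, c) : ℝ × ℝ) + (1 - t) • ((x₁, c) : ℝ × ℝ) = (x, c) := by
      have : t * x₂ + (1 - t) * x₁ = x := by
        have h' : t * (x₂ - x₁) = x - x₁ := by rw [hts]; exact div_mul_cancel₀ _ hden.ne'
        linarith
      simp [Prod.smul_mk, Prod.mk_add_mk, this]
      ring
    rwa [he] at hmem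

/-- For a "convex" bounded subset of `ℝ`, the set of points that leave the set after
translating by `b` has measure at most `|b|`. -/
private lemma oneDim {S : Set ℝ}
    (hconv : ∀ ⦃p q r : ℝ⦄, p ∈ S → r ∈ S → p ≤ q → q ≤ r → q ∈ S)
    (hsub : S ⊆ Ioo (-1 : ℝ) 1) (b : ℝ) :
    volume {t | t ∈ S ∧ t + b ∉ S} ≤ ENNReal.ofReal |b| := by
  rcases lt_trichotomy b 0 with hb | hb | hb
  · refine le_trans (measure_mono (?_ : _ ⊆ Icc (sInf S) (sInf S - b))) ?_
    · rintro t ⟨ht, htb⟩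
      have hbdd : BddBelow S := ⟨-1, fun s hs => (hsub hs).1.le⟩
      refine ⟨csInf_le hbdd ht, ?_⟩
      by_contra hgt
      push_neg at hgt
      have hlt : sInf S < t + b := by linarith
      obtain ⟨s, hsS, hst⟩ := exists_lt_of_csInf_lt ⟨t, ht⟩ hlt
      exact htb (hconv hsS ht hst.le (by linarith))
    · rw [Real.volume_Icc]
      apply le_of_eq
      congr 1
      rw [abs_of_neg hb]
      ring
  · have : {t | t ∈ S ∧ t + b ∉ S} = ∅ := by
      ext t
      simp only [mem_setOf_eq, mem_empty_iff_false, iff_false, not_and, not_not, hb, add_zero]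
      exact id
    simp [this]
  · refine le_trans (measure_mono (?_ : _ ⊆ Icc (sSup S - b) (sSup S))) ?_
    · rintro t ⟨ht, htb⟩
      have hbdd : BddAbove S := ⟨1, fun s hs => (hsub hs).2.le⟩
      refine ⟨?_, le_csSup hbdd ht⟩
      by_contra hgt
      push_neg at hgt
      have hlt : t + b < sSup S := by linarith
      obtain ⟨s, hsS, hst⟩ := exists_lt_of_lt_csSup ⟨t, ht⟩ hlt
      exact htb (hconv ht hsS (by linarith) hst.le)
    · rw [Real.volume_Icc]
      apply le_of_eq
      congr 1
      rw [abs_of_pos hb]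
      ring

/-- Inequality (31): the area of the `ε`-collar `D⁺ \ D⁺_ε` of `D⁺` is at most `6√2 ε`,
where `D⁺_ε` consists of the points of `D⁺` at distance more than `ε` from `∂D⁺`. -/
theorem collar_area_bound
    (D : Set (ℝ × ℝ)) (hsub : D ⊆ Ioo (-1 : ℝ) 1 ×ˢ Ioo (-1 : ℝ) 1)
    (hopen : IsOpen D) (hconv : Convex ℝ D) (hsymm : SymmBothAxes D)
    (ε : ℝ) (hε : 0 < ε) :
    (volume (posPart D \
        {z ∈ posPart D | ε < Metric.infDist z (frontier (posPart D))})).toReal ≤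
      6 * Real.sqrt 2 * ε := by
  have hrt : (1.4 : ℝ) ≤ Real.sqrt 2 := by
    nlinarith [Real.sq_sqrt (by norm_num : (0:ℝ) ≤ 2), Real.sqrt_nonneg 2]
  have hRHS0 : 0 ≤ 6 * Real.sqrt 2 * ε := by positivity
  set K := posPart D with hKdef
  -- basic facts about K
  have hKbnd : ∀ p : ℝ × ℝ, p ∈ K → 0 < p.1 ∧ p.1 < 1 ∧ -1 < p.2 ∧ p.2 < 1 := by
    rintro p ⟨hD, hp⟩
    have h := hsub hD
    exact ⟨hp, h.1.2, h.2.1, h.2.2⟩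
  rcases eq_empty_or_nonempty K with hKe | hKne
  · rw [hKe]
    simpa using hRHS0
  have hKopen : IsOpen K := hopen.inter (isOpen_lt continuous_const continuous_fst)
  have hKconv : Convex ℝ K := by
    rintro p hp q hq s t hs ht hst
    refine ⟨hconv hp.1 hq.1 hs ht hst, ?_⟩
    have hp1 : 0 < p.1 := hp.2
    have hq1 : 0 < q.1 := hq.2
    show 0 < (s • p + t • q).1
    have hfst : (s • p + t • q).1 = s * p.1 + t * q.1 := rfl
    rw [hfst]
    rcases eq_or_lt_of_le hs with h0 | h0
    · have hts : t = 1 := by linarith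
      rw [← h0, hts]; simpa using hq1
    · nlinarith [mul_nonneg ht hq1.le]
  have hsymmx : ∀ x y : ℝ, (x, y) ∈ D → (-x, y) ∈ D := fun x y h => ((hsymm x y).1).1 h
  -- nested vertical slices
  have hnest : ∀ x₁ x₂ y : ℝ, 0 < x₁ → x₁ ≤ x₂ → (x₂, y) ∈ K → (x₁, y) ∈ K := by
    intro x₁ x₂ y h0 hle h2
    have hx2 : 0 < x₂ := h2.2
    exact ⟨seg_horiz hconv (hsymmx _ _ h2.1) h2.1 (by linarith) hle, h0⟩
  set a : ℝ := 21 / 20 * ε with ha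
  have ha0 : 0 < a := by positivity
  have hεa : ε < a := by rw [ha]; linarith
  -- the four auxiliary sets
  set W : Set (ℝ × ℝ) := {z | z ∈ K ∧ z + (a, 0) ∉ K} with hWdef
  set T : Set (ℝ × ℝ) := {z | z ∈ K ∧ z + (a, a) ∉ K} with hTdef
  set B : Set (ℝ × ℝ) := {z | z ∈ K ∧ z + (a, -a) ∉ K} with hBdef
  set SL : Set (ℝ × ℝ) := Ioc 0 a ×ˢ Ioo (-1 : ℝ) 1 with hSLdef
  -- frontier nonempty
  have hfront : (frontier K).Nonempty := by
    by_contra h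
    rw [not_nonempty_iff_eq_empty] at h
    have hcl : closure K ⊆ K := by
      intro x hx
      by_contra hxK
      have : x ∈ frontier K := ⟨hx, by rwa [hKopen.interior_eq]⟩
      rw [h] at this
      exact this
    have hclosed : IsClosed K := isClosed_of_closure_subset hcl
    rcases isClopen_iff.1 ⟨hclosed, hKopen⟩ with h1 | h1
    · exact hKne.ne_empty h1
    · have h2 : ((2 : ℝ), (0 : ℝ)) ∈ K := h1 ▸ mem_univ _
      have := (hKbnd _ h2).2.1
      norm_num at this
  -- covering lemma
  have hcover : K \ {z ∈ K | ε < Metric.infDist z (frontier K)} ⊆ SL ∪ (T ∪ B) := by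
    rintro ⟨x, y⟩ ⟨hzK, hz2⟩
    have hinf : Metric.infDist ((x, y) : ℝ × ℝ) (frontier K) ≤ ε := by
      by_contra hc
      push_neg at hc
      exact hz2 ⟨hzK, hc⟩
    by_cases hxa : x ≤ a
    · left
      obtain ⟨hb1, _, hb3, hb4⟩ := hKbnd _ hzK
      exact ⟨⟨hb1, hxa⟩, hb3, hb4⟩
    push_neg at hxa
    by_cases hT1 : ((x, y) : ℝ × ℝ) + (a, a) ∈ K
    · by_cases hB1 : ((x, y) : ℝ × ℝ) + (a, -a) ∈ K
      · exfalso
        have hball : Metric.closedBall ((x, y) : ℝ × ℝ) a ⊆ K := by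
          rintro ⟨w1, w2⟩ hw
          rw [Metric.mem_closedBall, Prod.dist_eq, max_le_iff, Real.dist_eq, Real.dist_eq] at hw
          obtain ⟨hw1, hw2⟩ := hw
          rw [abs_le] at hw1 hw2
          have h1 : ((x + a, y + -a) : ℝ × ℝ) ∈ K := hB1
          have h2 : ((x + a, y + a) : ℝ × ℝ) ∈ K := hT1
          have hup : ((x + a, w2) : ℝ × ℝ) ∈ K :=
            seg_vert hKconv h1 h2 (by linarith) (by linarith)
          exact hnest w1 (x + a) w2 (by linarith) (by linarith) hup
        have hlow : a ≤ Metric.infDist ((x, y) : ℝ × ℝ) (frontier K) := by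
          by_contra hc
          push_neg at hc
          obtain ⟨w, hwf, hwd⟩ := (Metric.infDist_lt_iff hfront).1 hc
          have hwK : w ∈ K := hball (by
            rw [Metric.mem_closedBall, dist_comm]
            exact hwd.le)
          have hwnK : w ∉ K := by
            rw [frontier, hKopen.interior_eq] at hwf
            exact hwf.2
          exact hwnK hwK
        linarith
      · exact Or.inr (Or.inr ⟨hzK, hB1⟩)
    · exact Or.inr (Or.inl ⟨hzK, hT1⟩)
  -- measurability
  have hKmeas : MeasurableSet K := hKopen.measurableSet
  have hWmeas : MeasurableSet W := by
    have : W = K ∩ (fun z : ℝ × ℝ => z + (a, 0)) ⁻¹' Kᶜ := rfl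
    rw [this]
    exact hKmeas.inter ((measurable_id.add_const _) hKmeas.compl)
  have hTmeas : MeasurableSet T := by
    have : T = K ∩ (fun z : ℝ × ℝ => z + (a, a)) ⁻¹' Kᶜ := rfl
    rw [this]
    exact hKmeas.inter ((measurable_id.add_const _) hKmeas.compl)
  have hBmeas : MeasurableSet B := by
    have : B = K ∩ (fun z : ℝ × ℝ => z + (a, -a)) ⁻¹' Kᶜ := rfl
    rw [this]
    exact hKmeas.inter ((measurable_id.add_const _) hKmeas.compl)
  -- volume of W via horizontal slices
  have hWvol : volume W ≤ ENNReal.ofReal (2 * a) := by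
    have hrw : (volume : Measure (ℝ × ℝ)) W
        = ∫⁻ y, volume ((fun x => (x, y)) ⁻¹' W) := by
      rw [Measure.volume_eq_prod, Measure.prod_apply_symm hWmeas]
    rw [hrw]
    have hpt : ∀ y : ℝ, volume ((fun x => (x, y)) ⁻¹' W)
        ≤ (Ioo (-1 : ℝ) 1).indicator (fun _ => ENNReal.ofReal a) y := by
      intro y
      by_cases hy : y ∈ Ioo (-1 : ℝ) 1
      · rw [indicator_of_mem hy]
        have heq : ((fun x => (x, y)) ⁻¹' W)
            = {t | t ∈ {s : ℝ | (s, y) ∈ K} ∧ t + a ∉ {s : ℝ | (s, y) ∈ K}} := by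
          ext t
          simp only [hWdef, mem_preimage, mem_setOf_eq, Prod.mk_add_mk, add_zero]
        rw [heq]
        have h1 : ∀ ⦃p q r : ℝ⦄, p ∈ {s : ℝ | (s, y) ∈ K} → r ∈ {s : ℝ | (s, y) ∈ K}
            → p ≤ q → q ≤ r → q ∈ {s : ℝ | (s, y) ∈ K} :=
          fun p q r hp hr h1 h2 => seg_horiz hKconv hp hr h1 h2
        have h2 : {s : ℝ | (s, y) ∈ K} ⊆ Ioo (-1 : ℝ) 1 := by
          intro s hs
          obtain ⟨hb1, hb2, _, _⟩ := hKbnd _ hs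
          exact ⟨by linarith, hb2⟩
        have := oneDim h1 h2 a
        rwa [abs_of_pos ha0] at this
      · have hemp : ((fun x => (x, y)) ⁻¹' W) = ∅ := by
          ext t
          simp only [mem_preimage, mem_empty_iff_false, iff_false]
          intro htW
          obtain ⟨_, _, hb3, hb4⟩ := hKbnd _ htW.1
          exact hy ⟨hb3, hb4⟩
        rw [hemp, indicator_of_notMem hy]
        simp
    calc ∫⁻ y, volume ((fun x => (x, y)) ⁻¹' W)
        ≤ ∫⁻ y, (Ioo (-1 : ℝ) 1).indicator (fun _ => ENNReal.ofReal a) y :=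
          lintegral_mono hpt
      _ = ENNReal.ofReal a * volume (Ioo (-1 : ℝ) 1) := by
          rw [lintegral_indicator measurableSet_Ioo, setLIntegral_const]
      _ = ENNReal.ofReal (2 * a) := by
          rw [Real.volume_Ioo, ← ENNReal.ofReal_mul ha0.le]
          congr 1
          ring
  -- volumes of T and B via vertical slices
  have hTBvol : ∀ (b : ℝ), |b| = a →
      volume {z : ℝ × ℝ | z ∈ K ∧ z + (a, b) ∉ K} ≤ ENNReal.ofReal (3 * a) := by
    intro b hb
    have hmeas : MeasurableSet {z : ℝ × ℝ | z ∈ K ∧ z + (a, b) ∉ K} := by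
      have : {z : ℝ × ℝ | z ∈ K ∧ z + (a, b) ∉ K}
          = K ∩ (fun z : ℝ × ℝ => z + (a, b)) ⁻¹' Kᶜ := rfl
      rw [this]
      exact hKmeas.inter ((measurable_id.add_const _) hKmeas.compl)
    have hrw : (volume : Measure (ℝ × ℝ)) {z : ℝ × ℝ | z ∈ K ∧ z + (a, b) ∉ K}
        = ∫⁻ x, volume (Prod.mk x ⁻¹' {z : ℝ × ℝ | z ∈ K ∧ z + (a, b) ∉ K}) := by
      rw [Measure.volume_eq_prod, Measure.prod_apply hmeas]
    rw [hrw]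
    have hpt : ∀ x : ℝ, volume (Prod.mk x ⁻¹' {z : ℝ × ℝ | z ∈ K ∧ z + (a, b) ∉ K})
        ≤ volume (Prod.mk x ⁻¹' W)
          + (Ioo (0 : ℝ) 1).indicator (fun _ => ENNReal.ofReal a) x := by
      intro x
      by_cases hx : x ∈ Ioo (0 : ℝ) 1
      · rw [indicator_of_mem hx]
        have hincl : Prod.mk x ⁻¹' {z : ℝ × ℝ | z ∈ K ∧ z + (a, b) ∉ K}
            ⊆ (Prod.mk x ⁻¹' W)
              ∪ {t | t ∈ {s : ℝ | (x + a, s) ∈ K} ∧ t + b ∉ {s : ℝ | (x + a, s) ∈ K}} := by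
          intro t ht
          simp only [mem_preimage, mem_setOf_eq, Prod.mk_add_mk] at ht
          by_cases hxw : ((x + a, t) : ℝ × ℝ) ∈ K
          · exact Or.inr ⟨hxw, ht.2⟩
          · refine Or.inl ⟨ht.1, ?_⟩
            simpa using hxw
        refine le_trans (measure_mono hincl) (le_trans (measure_union_le _ _) ?_)
        gcongr
        have h1 : ∀ ⦃p q r : ℝ⦄, p ∈ {s : ℝ | (x + a, s) ∈ K} → r ∈ {s : ℝ | (x + a, s) ∈ K}
            → p ≤ q → q ≤ r → q ∈ {s : ℝ | (x + a, s) ∈ K} :=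
          fun p q r hp hr hh1 hh2 => seg_vert hKconv hp hr hh1 hh2
        have h2 : {s : ℝ | (x + a, s) ∈ K} ⊆ Ioo (-1 : ℝ) 1 := by
          intro s hs
          obtain ⟨_, _, hb3, hb4⟩ := hKbnd _ hs
          exact ⟨hb3, hb4⟩
        have := oneDim h1 h2 b
        rwa [hb] at this
      · have hemp : Prod.mk x ⁻¹' {z : ℝ × ℝ | z ∈ K ∧ z + (a, b) ∉ K} = ∅ := by
          ext t
          simp only [mem_preimage, mem_setOf_eq, mem_empty_iff_false, iff_false, not_and]
          intro htK
          obtain ⟨hb1, hb2, _, _⟩ := hKbnd _ htK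
          exact absurd (⟨hb1, hb2⟩ : x ∈ Ioo (0:ℝ) 1) hx
        rw [hemp]
        simp
    calc ∫⁻ x, volume (Prod.mk x ⁻¹' {z : ℝ × ℝ | z ∈ K ∧ z + (a, b) ∉ K})
        ≤ ∫⁻ x, (volume (Prod.mk x ⁻¹' W)
            + (Ioo (0 : ℝ) 1).indicator (fun _ => ENNReal.ofReal a) x) :=
          lintegral_mono hpt
      _ = (∫⁻ x, volume (Prod.mk x ⁻¹' W))
            + ∫⁻ x, (Ioo (0 : ℝ) 1).indicator (fun _ => ENNReal.ofReal a) x :=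
          lintegral_add_left (measurable_measure_prodMk_left hWmeas) _
      _ ≤ ENNReal.ofReal (2 * a) + ENNReal.ofReal a := by
          gcongr
          · have : (∫⁻ x, volume (Prod.mk x ⁻¹' W)) = volume W := by
              rw [Measure.volume_eq_prod, Measure.prod_apply hWmeas]
            rw [this]
            exact hWvol
          · rw [lintegral_indicator measurableSet_Ioo, setLIntegral_const, Real.volume_Ioo]
            simp
      _ = ENNReal.ofReal (3 * a) := by
          rw [← ENNReal.ofReal_add (by positivity) ha0.le]
          ring_nf
  have hTvol : volume T ≤ ENNReal.ofReal (3 * a) := hTBvol a (abs_of_pos ha0)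
  have hBvol : volume B ≤ ENNReal.ofReal (3 * a) := by
    have := hTBvol (-a) (by rw [abs_neg, abs_of_pos ha0])
    exact this
  have hSLvol : volume SL ≤ ENNReal.ofReal (2 * a) := by
    rw [hSLdef, Measure.volume_eq_prod, Measure.prod_prod, Real.volume_Ioc, Real.volume_Ioo]
    rw [← ENNReal.ofReal_mul (by linarith)]
    apply ENNReal.ofReal_le_ofReal
    nlinarith
  -- assemble
  have hmain : volume (K \ {z ∈ K | ε < Metric.infDist z (frontier K)})
      ≤ ENNReal.ofReal (8 * a) := by
    calc volume (K \ {z ∈ K | ε < Metric.infDist z (frontier K)})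
        ≤ volume (SL ∪ (T ∪ B)) := measure_mono hcover
      _ ≤ volume SL + volume (T ∪ B) := measure_union_le _ _
      _ ≤ volume SL + (volume T + volume B) := by
          gcongr
          exact measure_union_le _ _
      _ ≤ ENNReal.ofReal (2 * a) + (ENNReal.ofReal (3 * a) + ENNReal.ofReal (3 * a)) := by
          gcongr
      _ = ENNReal.ofReal (8 * a) := by
          rw [← ENNReal.ofReal_add (by positivity) (by positivity),
            ← ENNReal.ofReal_add (by positivity) (by positivity)]
          congr 1
          ring
  have htr : (volume (K \ {z ∈ K | ε < Metric.infDist z (frontier K)})).toReal ≤ 8 * a := by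
    have := ENNReal.toReal_mono ENNReal.ofReal_ne_top hmain
    rwa [ENNReal.toReal_ofReal (by positivity)] at this
  refine le_trans htr ?_
  rw [ha]
  nlinarith [mul_le_mul_of_nonneg_right hrt hε.le]
end

section
/- For t > 0 and x, y ∈ (0,1) let p_t(x,y) = Σ_{n=1}^∞ 2 e^{−n²π²t} sin(nπx) sin(nπy). For every 0 < α < 1 and ε > 0 there exists Q > 0 such that for all s, t with 0 < s < t and min(s, t − s) ≥ Q/2, and all x, z ∈ (0,1): ∫₀^α p_s(x,y) p_{t−s}(y,z) dy < (β(α) + ε) · ∫₀^1 p_s(x,y) p_{t−s}(y,z) dy. -/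
open Real Set Filter

set_option maxHeartbeats 1000000

noncomputable section

/-- The Dirichlet heat kernel of the interval `(0,1)`:
`p_t(x,y) = Σ_{n ≥ 1} 2 e^{-n²π²t} sin(nπx) sin(nπy)`. -/
def heatKernel (t x y : ℝ) : ℝ :=
  ∑' n : ℕ, 2 * Real.exp (-(((n : ℝ) + 1) ^ 2 * π ^ 2 * t)) *
    Real.sin (((n : ℝ) + 1) * π * x) * Real.sin (((n : ℝ) + 1) * π * y)

/-- `β(α)`: the proportion of the squared mass of the first Dirichlet eigenfunction
of `(0,1)` carried by `(0,α)`. -/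
def betaFn (α : ℝ) : ℝ :=
  (∫ x in (0 : ℝ)..α, Real.sin (π * x) ^ 2) / ∫ x in (0 : ℝ)..1, Real.sin (π * x) ^ 2

lemma abs_sin_nat_mul_le (n : ℕ) (x : ℝ) : |Real.sin (n * x)| ≤ n * |Real.sin x| := by
  induction n with
  | zero => simp
  | succ n ih =>
    have h : ((n : ℝ) + 1) * x = n * x + x := by ring
    push_cast
    rw [h, Real.sin_add]
    calc |Real.sin (n*x) * Real.cos x + Real.cos (n*x) * Real.sin x|
        ≤ |Real.sin (n*x) * Real.cos x| + |Real.cos (n*x) * Real.sin x| := abs_add_le _ _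
      _ ≤ |Real.sin (n*x)| * 1 + 1 * |Real.sin x| := by
          rw [abs_mul, abs_mul]
          gcongr
          · exact Real.abs_cos_le_one _
          · exact Real.abs_cos_le_one _
      _ ≤ n * |Real.sin x| + 1 * |Real.sin x| := by rw [mul_one]; gcongr
      _ = ((n : ℝ) + 1) * |Real.sin x| := by ring

lemma pow_sq_le (n : ℕ) : ((n : ℝ) + 2)^2 ≤ 16 * 2^n := by
  have h : (n + 2)^2 ≤ 16 * 2^n := by
    induction n with
    | zero => norm_num
    | succ n ih =>
      have h : n < 2 ^ n := Nat.lt_two_pow_self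
      have h2 : 1 ≤ 2^n := Nat.one_le_two_pow
      ring_nf
      ring_nf at ih
      nlinarith
  calc ((n : ℝ) + 2)^2 = ((n + 2 : ℕ) : ℝ)^2 := by push_cast; ring
    _ ≤ ((16 * 2^n : ℕ) : ℝ) := by
        rw [← Nat.cast_pow]
        exact_mod_cast h
    _ = 16 * 2^n := by push_cast; ring

lemma exp_pi_lt_one {t : ℝ} (ht : 0 < t) : Real.exp (-(π^2*t)) < 1 := by
  rw [Real.exp_lt_one_iff]
  have h : 0 < π^2*t := by positivity
  linarith

lemma exp_term_le {t : ℝ} (ht : 0 < t) (n : ℕ) :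
    Real.exp (-(((n : ℝ) + 1) ^ 2 * π ^ 2 * t)) ≤ Real.exp (-(π^2*t)) ^ (n+1) := by
  rw [← Real.exp_nat_mul]
  apply Real.exp_le_exp.2
  have hπ := Real.pi_pos
  have h1 : ((n:ℝ)+1) ≤ ((n:ℝ)+1)^2 := by nlinarith [Nat.cast_nonneg (α := ℝ) n]
  have hpt : 0 < π^2*t := by positivity
  push_cast
  nlinarith [mul_le_mul_of_nonneg_right h1 hpt.le]

lemma summable_u {t : ℝ} (ht : 0 < t) :
    Summable (fun n : ℕ => 2 * Real.exp (-(((n : ℝ) + 1) ^ 2 * π ^ 2 * t))) := by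
  have hg : Summable (fun n : ℕ => 2 * Real.exp (-(π^2*t)) * Real.exp (-(π^2*t)) ^ n) :=
    (summable_geometric_of_lt_one (Real.exp_nonneg _) (exp_pi_lt_one ht)).mul_left _
  refine Summable.of_nonneg_of_le (fun n => by positivity) (fun n => ?_) hg
  have h := exp_term_le ht n
  have h2 : 2 * Real.exp (-(((n : ℝ) + 1) ^ 2 * π ^ 2 * t)) ≤ 2 * Real.exp (-(π^2*t)) ^ (n+1) := by
    linarith
  exact h2.trans (le_of_eq (by ring))

lemma summable_term {t : ℝ} (ht : 0 < t) (x y : ℝ) :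
    Summable (fun n : ℕ => 2 * Real.exp (-(((n : ℝ) + 1) ^ 2 * π ^ 2 * t)) *
      Real.sin (((n : ℝ) + 1) * π * x) * Real.sin (((n : ℝ) + 1) * π * y)) := by
  apply (summable_u ht).of_norm_bounded
  intro n
  rw [Real.norm_eq_abs, abs_mul, abs_mul]
  have h1 : |Real.sin (((n : ℝ) + 1) * π * x)| ≤ 1 := Real.abs_sin_le_one _
  have h2 : |Real.sin (((n : ℝ) + 1) * π * y)| ≤ 1 := Real.abs_sin_le_one _
  have h3 : |2 * Real.exp (-(((n : ℝ) + 1) ^ 2 * π ^ 2 * t))| =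
      2 * Real.exp (-(((n : ℝ) + 1) ^ 2 * π ^ 2 * t)) := abs_of_pos (by positivity)
  calc |2 * Real.exp _| * |Real.sin (((n : ℝ) + 1) * π * x)| * |Real.sin (((n : ℝ) + 1) * π * y)|
      ≤ |2 * Real.exp (-(((n : ℝ) + 1) ^ 2 * π ^ 2 * t))| * 1 * 1 := by
        gcongr <;> positivity
    _ = 2 * Real.exp (-(((n : ℝ) + 1) ^ 2 * π ^ 2 * t)) := by rw [h3]; ring

lemma heatKernel_continuous_right {t : ℝ} (ht : 0 < t) (x : ℝ) :
    Continuous (fun y => heatKernel t x y) := by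
  apply continuous_tsum (u := fun n : ℕ => 2 * Real.exp (-(((n : ℝ) + 1) ^ 2 * π ^ 2 * t)))
  · intro n
    fun_prop
  · exact summable_u ht
  · intro n y
    rw [Real.norm_eq_abs, abs_mul, abs_mul, abs_mul]
    have h3 : |(2:ℝ)| * |Real.exp (-(((n : ℝ) + 1) ^ 2 * π ^ 2 * t))| =
        2 * Real.exp (-(((n : ℝ) + 1) ^ 2 * π ^ 2 * t)) := by
      rw [abs_of_pos (by positivity : (0:ℝ) < 2), abs_of_pos (Real.exp_pos _)]
    calc |(2:ℝ)| * |Real.exp _| * |Real.sin (((n : ℝ) + 1) * π * x)| *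
        |Real.sin (((n : ℝ) + 1) * π * y)|
        ≤ |(2:ℝ)| * |Real.exp (-(((n : ℝ) + 1) ^ 2 * π ^ 2 * t))| * 1 * 1 := by
          gcongr
          · exact Real.abs_sin_le_one _
          · exact Real.abs_sin_le_one _
    _ = 2 * Real.exp (-(((n : ℝ) + 1) ^ 2 * π ^ 2 * t)) := by rw [mul_one, mul_one, h3]

lemma heatKernel_continuous_left {t : ℝ} (ht : 0 < t) (z : ℝ) :
    Continuous (fun y => heatKernel t y z) := by
  apply continuous_tsum (u := fun n : ℕ => 2 * Real.exp (-(((n : ℝ) + 1) ^ 2 * π ^ 2 * t)))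
  · intro n
    fun_prop
  · exact summable_u ht
  · intro n y
    rw [Real.norm_eq_abs, abs_mul, abs_mul, abs_mul]
    have h3 : |(2:ℝ)| * |Real.exp (-(((n : ℝ) + 1) ^ 2 * π ^ 2 * t))| =
        2 * Real.exp (-(((n : ℝ) + 1) ^ 2 * π ^ 2 * t)) := by
      rw [abs_of_pos (by positivity : (0:ℝ) < 2), abs_of_pos (Real.exp_pos _)]
    calc |(2:ℝ)| * |Real.exp _| * |Real.sin (((n : ℝ) + 1) * π * y)| *
        |Real.sin (((n : ℝ) + 1) * π * z)|
        ≤ |(2:ℝ)| * |Real.exp (-(((n : ℝ) + 1) ^ 2 * π ^ 2 * t))| * 1 * 1 := by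
          gcongr
          · exact Real.abs_sin_le_one _
          · exact Real.abs_sin_le_one _
    _ = 2 * Real.exp (-(((n : ℝ) + 1) ^ 2 * π ^ 2 * t)) := by rw [mul_one, mul_one, h3]

lemma kernel_sandwich {t : ℝ} (ht : 0 < t) {x y : ℝ}
    (hx : 0 ≤ Real.sin (π*x)) (hy : 0 ≤ Real.sin (π*y))
    (h4 : Real.exp (-(3*(π^2*t))) ≤ 1/4) :
    |heatKernel t x y - 2 * Real.exp (-(π^2*t)) * Real.sin (π*x) * Real.sin (π*y)|
      ≤ 32 * Real.exp (-(3*(π^2*t))) *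
        (2 * Real.exp (-(π^2*t)) * Real.sin (π*x) * Real.sin (π*y)) := by
  set e3 := Real.exp (-(3*(π^2*t))) with he3
  set M := 2 * Real.exp (-(π^2*t)) * Real.sin (π*x) * Real.sin (π*y) with hM
  have hMpos : 0 ≤ M := by rw [hM]; positivity
  have he3pos : 0 < e3 := Real.exp_pos _
  have h2e3 : 2*e3 < 1 := by linarith
  have h2e3' : 0 ≤ 2*e3 := by linarith
  set f : ℕ → ℝ := fun n => 2 * Real.exp (-(((n : ℝ) + 1) ^ 2 * π ^ 2 * t)) *
      Real.sin (((n : ℝ) + 1) * π * x) * Real.sin (((n : ℝ) + 1) * π * y) with hf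
  have hsum : Summable f := summable_term ht x y
  have hshift : Summable (fun n => f (n+1)) := (summable_nat_add_iff 1).2 hsum
  have h0 : heatKernel t x y = f 0 + ∑' n, f (n+1) := by
    rw [heatKernel]; exact Summable.tsum_eq_zero_add hsum
  have hf0 : f 0 = M := by rw [hf, hM]; norm_num
  have hpt : 0 < π^2*t := by positivity
  have hbound : ∀ n : ℕ, |f (n+1)| ≤ (M * (16*e3)) * (2*e3)^n := by
    intro n
    have hax : |Real.sin (((n:ℝ) + 2) * π * x)| ≤ ((n:ℝ)+2) * Real.sin (π*x) := by
      have h := abs_sin_nat_mul_le (n+2) (π*x)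
      rw [abs_of_nonneg hx] at h
      calc |Real.sin (((n:ℝ) + 2) * π * x)| = |Real.sin ((n+2:ℕ) * (π*x))| := by
            push_cast; ring_nf
        _ ≤ ((n+2:ℕ):ℝ) * Real.sin (π*x) := h
        _ = ((n:ℝ)+2) * Real.sin (π*x) := by push_cast; ring
    have hay : |Real.sin (((n:ℝ) + 2) * π * y)| ≤ ((n:ℝ)+2) * Real.sin (π*y) := by
      have h := abs_sin_nat_mul_le (n+2) (π*y)
      rw [abs_of_nonneg hy] at h
      calc |Real.sin (((n:ℝ) + 2) * π * y)| = |Real.sin ((n+2:ℕ) * (π*y))| := by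
            push_cast; ring_nf
        _ ≤ ((n+2:ℕ):ℝ) * Real.sin (π*y) := h
        _ = ((n:ℝ)+2) * Real.sin (π*y) := by push_cast; ring
    have hE : Real.exp (-(((n:ℝ)+2)^2 * π^2 * t)) ≤ Real.exp (-(π^2*t)) * e3^(n+1) := by
      rw [he3, ← Real.exp_nat_mul, ← Real.exp_add]
      apply Real.exp_le_exp.2
      have key : (3*((n:ℝ)+1)+1) ≤ ((n:ℝ)+2)^2 := by nlinarith [Nat.cast_nonneg (α := ℝ) n]
      push_cast
      nlinarith [mul_le_mul_of_nonneg_right key hpt.le]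
    have hfn : f (n+1) = 2 * Real.exp (-(((n:ℝ)+2)^2 * π^2 * t)) *
        Real.sin (((n:ℝ) + 2) * π * x) * Real.sin (((n:ℝ) + 2) * π * y) := by
      rw [hf]; push_cast; ring_nf
    rw [hfn]
    have hEpos : (0:ℝ) < Real.exp (-(((n:ℝ)+2)^2 * π^2 * t)) := Real.exp_pos _
    calc |2 * Real.exp (-(((n:ℝ)+2)^2 * π^2 * t)) *
        Real.sin (((n:ℝ) + 2) * π * x) * Real.sin (((n:ℝ) + 2) * π * y)|
        = 2 * Real.exp (-(((n:ℝ)+2)^2 * π^2 * t)) *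
          |Real.sin (((n:ℝ) + 2) * π * x)| * |Real.sin (((n:ℝ) + 2) * π * y)| := by
          rw [abs_mul, abs_mul, abs_mul]
          rw [abs_of_nonneg (by norm_num : (0:ℝ) ≤ 2), abs_of_nonneg hEpos.le]
      _ ≤ 2 * Real.exp (-(((n:ℝ)+2)^2 * π^2 * t)) *
          (((n:ℝ)+2) * Real.sin (π*x)) * (((n:ℝ)+2) * Real.sin (π*y)) := by
          gcongr
      _ = ((n:ℝ)+2)^2 * Real.exp (-(((n:ℝ)+2)^2 * π^2 * t)) *
          (2 * Real.sin (π*x) * Real.sin (π*y)) := by ring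
      _ ≤ (16 * 2^n) * (Real.exp (-(π^2*t)) * e3^(n+1)) *
          (2 * Real.sin (π*x) * Real.sin (π*y)) := by
          have hs : (0:ℝ) ≤ 2 * Real.sin (π*x) * Real.sin (π*y) := by positivity
          apply mul_le_mul_of_nonneg_right _ hs
          exact mul_le_mul (pow_sq_le n) hE hEpos.le (by positivity)
      _ = (M * (16*e3)) * (2*e3)^n := by rw [hM]; ring
  have hsb : Summable (fun n : ℕ => (M * (16*e3)) * (2*e3)^n) :=
    (summable_geometric_of_lt_one h2e3' h2e3).mul_left _
  have habs : Summable (fun n => |f (n+1)|) := hshift.abs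
  have h1 : |∑' n, f (n+1)| ≤ ∑' n, |f (n+1)| := by
    have h := norm_tsum_le_tsum_norm (f := fun n => f (n+1))
      (by simpa [Real.norm_eq_abs] using habs)
    simpa [Real.norm_eq_abs] using h
  have h2 : ∑' n, |f (n+1)| ≤ ∑' n, (M * (16*e3)) * (2*e3)^n :=
    Summable.tsum_le_tsum hbound habs hsb
  have h3 : ∑' n : ℕ, (M * (16*e3)) * (2*e3)^n = (M * (16*e3)) * (1 - 2*e3)⁻¹ := by
    rw [tsum_mul_left, tsum_geometric_of_lt_one h2e3' h2e3]
  have hinv : (1 - 2*e3)⁻¹ ≤ 2 := by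
    have h12 : (1:ℝ)/2 ≤ 1 - 2*e3 := by linarith
    calc (1 - 2*e3)⁻¹ ≤ ((1:ℝ)/2)⁻¹ := by
          apply inv_anti₀ (by norm_num) h12
      _ = 2 := by norm_num
  have h4' : (M * (16*e3)) * (1 - 2*e3)⁻¹ ≤ 32 * e3 * M := by
    have h := mul_le_mul_of_nonneg_left hinv (by positivity : (0:ℝ) ≤ M * (16*e3))
    linarith [h]
  have hrw : heatKernel t x y - M = ∑' n, f (n+1) := by rw [h0, hf0]; ring
  rw [hrw]
  linarith [h1, h2, h3.le, h4']

/-- Inequality (20): the conditioned midpoint distribution of Brownian motion in `(0,1)`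
gives mass at most `β(α) + ε` to `(0,α)`, provided both time gaps are at least `Q/2`. -/
theorem heatKernel_bridge_estimate
    (α ε : ℝ) (hα0 : 0 < α) (hα1 : α < 1) (hε : 0 < ε) :
    ∃ Q > (0 : ℝ), ∀ s t : ℝ, 0 < s → s < t → Q / 2 ≤ min s (t - s) →
      ∀ x ∈ Ioo (0 : ℝ) 1, ∀ z ∈ Ioo (0 : ℝ) 1,
        (∫ y in (0 : ℝ)..α, heatKernel s x y * heatKernel (t - s) y z) <
          (betaFn α + ε) * ∫ y in (0 : ℝ)..1, heatKernel s x y * heatKernel (t - s) y z := by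
  have hπ := Real.pi_pos
  set A := ∫ y in (0:ℝ)..α, Real.sin (π * y) ^ 2 with hAdef
  set B := ∫ y in (0:ℝ)..1, Real.sin (π * y) ^ 2 with hBdef
  have hcont : Continuous (fun y : ℝ => Real.sin (π * y) ^ 2) := by fun_prop
  have hA : 0 < A := by
    apply intervalIntegral.intervalIntegral_pos_of_pos_on (hcont.intervalIntegrable _ _) _ hα0
    intro y hy
    have h1 : 0 < Real.sin (π * y) := by
      apply Real.sin_pos_of_pos_of_lt_pi (by nlinarith [hy.1])
      nlinarith [hy.2]
    positivity
  have hB : 0 < B := by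
    apply intervalIntegral.intervalIntegral_pos_of_pos_on (hcont.intervalIntegrable _ _) _ one_pos
    intro y hy
    have h1 : 0 < Real.sin (π * y) := by
      apply Real.sin_pos_of_pos_of_lt_pi (by nlinarith [hy.1])
      nlinarith [hy.2]
    positivity
  have hbetaB : betaFn α * B = A := div_mul_cancel₀ _ hB.ne'
  have hbeta_nonneg : 0 ≤ betaFn α := div_nonneg hA.le hB.le
  set δ := min (1/2 : ℝ) (ε*B/(5*A+2*ε*B+1)) with hδdef
  have hD : (0:ℝ) < 5*A+2*ε*B+1 := by positivity
  have hδpos : 0 < δ := by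
    apply lt_min (by norm_num)
    positivity
  have hδhalf : δ ≤ 1/2 := min_le_left _ _
  have hδ2 : δ * (5*A+2*ε*B+1) ≤ ε*B := by
    have h := min_le_right (1/2 : ℝ) (ε*B/(5*A+2*ε*B+1))
    rw [← hδdef] at h
    exact (le_div_iff₀ hD).1 h
  have key : (1+δ)^2 * A < (betaFn α + ε) * ((1-δ)^2 * B) := by
    have hexp : (betaFn α + ε) * ((1-δ)^2 * B) = (1-δ)^2 * A + ε * (1-δ)^2 * B := by
      rw [← hbetaB]; ring
    rw [hexp]
    nlinarith [mul_pos hδpos hA, sq_nonneg δ, mul_nonneg (mul_nonneg hε.le (sq_nonneg δ)) hB.le,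
      mul_pos hδpos hδpos, mul_pos (mul_pos hδpos hε) hB]
  set T := max (1:ℝ) ((Real.log (32/δ) + 1)/(3*π^2)) with hTdef
  have hT1 : (1:ℝ) ≤ T := le_max_left _ _
  have hsmall : ∀ r : ℝ, T ≤ r →
      32 * Real.exp (-(3*(π^2*r))) ≤ δ ∧ Real.exp (-(3*(π^2*r))) ≤ 1/4 := by
    intro r hr
    have h3pi : (0:ℝ) < 3*π^2 := by positivity
    have hlog : Real.log (32/δ) + 1 ≤ 3*π^2*r := by
      have h := (div_le_iff₀ h3pi).1 ((le_max_right _ _).trans hr)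
      linarith
    have hexp : Real.exp (-(3*(π^2*r))) ≤ δ/32 := by
      have h1 : Real.exp (-(3*(π^2*r))) ≤ Real.exp (-Real.log (32/δ)) := by
        apply Real.exp_le_exp.2
        have : 3*(π^2*r) = 3*π^2*r := by ring
        rw [this]
        linarith
      have h2 : Real.exp (-Real.log (32/δ)) = δ/32 := by
        rw [Real.exp_neg, Real.exp_log (by positivity : (0:ℝ) < 32/δ)]
        field_simp
      linarith [h1, h2.le]
    constructor
    · linarith
    · linarith
  refine ⟨2*T, by linarith, ?_⟩
  intro s t hs hst hmin x hx z hz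
  set u := t - s with hu
  have hupos : 0 < u := by rw [hu]; linarith
  have hQT : (2*T)/2 = T := by ring
  rw [hQT] at hmin
  have hsT : T ≤ s := hmin.trans (min_le_left _ _)
  have huT : T ≤ u := hmin.trans (min_le_right _ _)
  obtain ⟨hδs, h4s⟩ := hsmall s hsT
  obtain ⟨hδu, h4u⟩ := hsmall u huT
  have hsinx : 0 < Real.sin (π*x) := by
    apply Real.sin_pos_of_pos_of_lt_pi (by nlinarith [hx.1])
    nlinarith [hx.2]
  have hsinz : 0 < Real.sin (π*z) := by
    apply Real.sin_pos_of_pos_of_lt_pi (by nlinarith [hz.1])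
    nlinarith [hz.2]
  set K := (2 * Real.exp (-(π^2*s)) * Real.sin (π*x)) *
      (2 * Real.exp (-(π^2*u)) * Real.sin (π*z)) with hKdef
  have hK : 0 < K := by rw [hKdef]; positivity
  -- pointwise sandwich on [0,1]
  have hsand : ∀ y ∈ Icc (0:ℝ) 1,
      (1-δ)^2 * (K * Real.sin (π*y)^2) ≤ heatKernel s x y * heatKernel u y z ∧
      heatKernel s x y * heatKernel u y z ≤ (1+δ)^2 * (K * Real.sin (π*y)^2) := by
    intro y hy
    have hsiny : 0 ≤ Real.sin (π*y) := by
      apply Real.sin_nonneg_of_nonneg_of_le_pi (by nlinarith [hy.1])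
      nlinarith [hy.2]
    set Ms := 2 * Real.exp (-(π^2*s)) * Real.sin (π*x) * Real.sin (π*y) with hMs
    set Mu := 2 * Real.exp (-(π^2*u)) * Real.sin (π*y) * Real.sin (π*z) with hMu
    have hMs0 : 0 ≤ Ms := by rw [hMs]; positivity
    have hMu0 : 0 ≤ Mu := by rw [hMu]; positivity
    have hS1 : |heatKernel s x y - Ms| ≤ δ * Ms := by
      have h := kernel_sandwich hs hsinx.le hsiny h4s
      have h2 : 32 * Real.exp (-(3*(π^2*s))) * Ms ≤ δ * Ms :=
        mul_le_mul_of_nonneg_right hδs hMs0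
      rw [← hMs] at h
      linarith
    have hS2 : |heatKernel u y z - Mu| ≤ δ * Mu := by
      have h := kernel_sandwich hupos hsiny hsinz.le h4u
      have h2 : 32 * Real.exp (-(3*(π^2*u))) * Mu ≤ δ * Mu :=
        mul_le_mul_of_nonneg_right hδu hMu0
      rw [← hMu] at h
      linarith
    rw [abs_le] at hS1 hS2
    have hKsin : K * Real.sin (π*y)^2 = Ms * Mu := by rw [hKdef, hMs, hMu]; ring
    have ha1 : (1-δ) * Ms ≤ heatKernel s x y := by
      have e : (1-δ) * Ms = Ms - δ * Ms := by ring
      rw [e]; linarith [hS1.1]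
    have ha2 : heatKernel s x y ≤ (1+δ) * Ms := by
      have e : (1+δ) * Ms = Ms + δ * Ms := by ring
      rw [e]; linarith [hS1.2]
    have hb1 : (1-δ) * Mu ≤ heatKernel u y z := by
      have e : (1-δ) * Mu = Mu - δ * Mu := by ring
      rw [e]; linarith [hS2.1]
    have hb2 : heatKernel u y z ≤ (1+δ) * Mu := by
      have e : (1+δ) * Mu = Mu + δ * Mu := by ring
      rw [e]; linarith [hS2.2]
    have h1δ : (0:ℝ) ≤ 1 - δ := by linarith
    have ha0 : 0 ≤ heatKernel s x y := le_trans (mul_nonneg h1δ hMs0) ha1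
    have hb0 : 0 ≤ heatKernel u y z := le_trans (mul_nonneg h1δ hMu0) hb1
    constructor
    · rw [hKsin]
      have h := mul_le_mul ha1 hb1 (mul_nonneg h1δ hMu0) ha0
      exact le_trans (le_of_eq (by ring)) h
    · rw [hKsin]
      have h := mul_le_mul ha2 hb2 hb0 (mul_nonneg (by linarith : (0:ℝ) ≤ 1+δ) hMs0)
      exact h.trans (le_of_eq (by ring))
  -- integrability
  have hcF : Continuous (fun y => heatKernel s x y * heatKernel u y z) :=
    (heatKernel_continuous_right hs x).mul (heatKernel_continuous_left hupos z)
  have hcG1 : Continuous (fun y : ℝ => (1+δ)^2 * (K * Real.sin (π*y)^2)) := by fun_prop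
  have hcG2 : Continuous (fun y : ℝ => (1-δ)^2 * (K * Real.sin (π*y)^2)) := by fun_prop
  -- integral bounds
  have hI1 : (∫ y in (0:ℝ)..α, heatKernel s x y * heatKernel u y z) ≤ (1+δ)^2 * (K * A) := by
    have h := intervalIntegral.integral_mono_on (μ := MeasureTheory.volume) hα0.le (hcF.intervalIntegrable _ _)
      (hcG1.intervalIntegrable _ _)
      (fun y hy => (hsand y (Icc_subset_Icc le_rfl hα1.le hy)).2)
    calc (∫ y in (0:ℝ)..α, heatKernel s x y * heatKernel u y z)
        ≤ ∫ y in (0:ℝ)..α, (1+δ)^2 * (K * Real.sin (π*y)^2) := h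
      _ = (1+δ)^2 * (K * A) := by
          rw [hAdef]
          rw [show (fun y : ℝ => (1+δ)^2 * (K * Real.sin (π*y)^2)) =
            (fun y : ℝ => ((1+δ)^2 * K) * Real.sin (π*y)^2) from funext fun y => by ring]
          rw [intervalIntegral.integral_const_mul]
          ring
  have hI2 : (1-δ)^2 * (K * B) ≤ ∫ y in (0:ℝ)..1, heatKernel s x y * heatKernel u y z := by
    have h := intervalIntegral.integral_mono_on (μ := MeasureTheory.volume) zero_le_one
      (hcG2.intervalIntegrable _ _) (hcF.intervalIntegrable _ _)
      (fun y hy => (hsand y hy).1)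
    calc (1-δ)^2 * (K * B)
        = ∫ y in (0:ℝ)..1, (1-δ)^2 * (K * Real.sin (π*y)^2) := by
          rw [hBdef]
          rw [show (fun y : ℝ => (1-δ)^2 * (K * Real.sin (π*y)^2)) =
            (fun y : ℝ => ((1-δ)^2 * K) * Real.sin (π*y)^2) from funext fun y => by ring]
          rw [intervalIntegral.integral_const_mul]
          ring
      _ ≤ _ := h
  -- conclude
  have hmid : (1+δ)^2 * (K * A) < (betaFn α + ε) * ((1-δ)^2 * (K * B)) := by
    calc (1+δ)^2 * (K * A) = K * ((1+δ)^2 * A) := by ring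
      _ < K * ((betaFn α + ε) * ((1-δ)^2 * B)) := mul_lt_mul_of_pos_left key hK
      _ = (betaFn α + ε) * ((1-δ)^2 * (K * B)) := by ring
  have hfinal : (betaFn α + ε) * ((1-δ)^2 * (K * B)) ≤
      (betaFn α + ε) * ∫ y in (0:ℝ)..1, heatKernel s x y * heatKernel u y z :=
    mul_le_mul_of_nonneg_left hI2 (by linarith)
  linarith [hI1, hmid, hfinal]
end
end
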